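/- arXiv:2207.07755 — 5 statements merged into one kernel-verified Lean document; each statement's English description precedes it below -/
import Mathlib

section
/- If nonnegative continuous functions v_1,...,v_N on [t_0,∞) satisfy v_k(t) ≤ D₁ k ∫_{t_0}^t e^{D₁ k (t-s)} (∑_{l=k+1}^N v_l(s) + 1) ds for all t ≥ t_0 and 1 ≤ k ≤ N, then for every 0 ≤ n ≤ N-2 and all t ≥ t_0, v_{N-n}(t) + v_{N-n+1}(t) + ... + v_N(t) + 1 ≤ (N^n / n!) e^{D₁ N (t - t_0)}. -/
/-!
Write `S_k = v_k + ⋯ + v_N + 1`, so that the hypothesis reads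
`v_k(t) ≤ D₁ k ∫_{t₀}^t e^{D₁ k (t-s)} S_{k+1}(s) ds`. Going down from `k = N`, where
`S_{N+1} = 1` gives `S_N ≤ e^{D₁ N (t-t₀)}`, insert the bound `S_{k+1} ≤ C e^{D₁ N (s-t₀)}` into
the integral: since `k < N`, the integral is at most `C e^{D₁ N (t-t₀)} / (D₁ (N - k))`, so
`S_k ≤ (k / (N - k) + 1) C e^{D₁ N (t-t₀)}`, and with `N - k = n + 1` the factor
`N / (n + 1)` turns `N^n / n!` into `N^(n+1) / (n+1)!`.
-/

open Real intervalIntegral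

theorem intervalIntegral.integral_mono_on_of_nonneg {f g : ℝ → ℝ} {a b : ℝ}
    {μ : MeasureTheory.Measure ℝ} (hab : a ≤ b) (hg : IntervalIntegrable g μ a b)
    (hg₀ : ∀ x ∈ Set.Icc a b, 0 ≤ g x) (h : ∀ x ∈ Set.Icc a b, f x ≤ g x) :
    ∫ x in a..b, f x ∂μ ≤ ∫ x in a..b, g x ∂μ := by
  by_cases hf : IntervalIntegrable f μ a b
  · exact integral_mono_on hab hf hg h
  · rw [integral_undef hf]
    exact integral_nonneg hab hg₀

theorem integral_exp_mul_sub_mul_exp_mul_sub {a b : ℝ} (hab : a ≠ b) (t₀ t : ℝ) :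
    ∫ s in t₀..t, exp (a * (t - s)) * exp (b * (s - t₀)) =
      (exp (b * (t - t₀)) - exp (a * (t - t₀))) / (b - a) := by
  have hba : b - a ≠ 0 := sub_ne_zero.2 hab.symm
  have hsplit : ∀ s, exp (a * (t - s)) * exp (b * (s - t₀)) =
      exp (a * t - b * t₀) * exp ((b - a) * s) := by
    intro s
    rw [← exp_add, ← exp_add]
    ring_nf
  simp_rw [hsplit]
  rw [integral_const_mul, integral_comp_mul_left (fun x => exp x) hba, integral_exp, smul_eq_mul,
    mul_left_comm, mul_sub, ← exp_add, ← exp_add, inv_mul_eq_div]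
  ring_nf

theorem mul_integral_exp_mul_sub (a t₀ t : ℝ) :
    a * ∫ s in t₀..t, exp (a * (t - s)) = exp (a * (t - t₀)) - 1 := by
  rcases eq_or_ne a 0 with rfl | ha
  · simp
  have h := integral_exp_mul_sub_mul_exp_mul_sub ha t₀ t
  simp only [zero_mul, exp_zero, mul_one, zero_sub] at h
  rw [h]
  field_simp
  ring

theorem mul_integral_exp_mul_sub_mul_le {a b C t₀ t : ℝ} {w : ℝ → ℝ} (ha : 0 ≤ a) (hab : a < b)
    (ht : t₀ ≤ t) (hC : 0 ≤ C) (hw : ∀ s ∈ Set.Icc t₀ t, w s ≤ C * exp (b * (s - t₀))) :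
    a * ∫ s in t₀..t, exp (a * (t - s)) * w s ≤ a / (b - a) * C * exp (b * (t - t₀)) := by
  have hcoef : 0 ≤ a / (b - a) * C := mul_nonneg (div_nonneg ha (sub_nonneg.2 hab.le)) hC
  calc a * ∫ s in t₀..t, exp (a * (t - s)) * w s
      ≤ a * ∫ s in t₀..t, exp (a * (t - s)) * (C * exp (b * (s - t₀))) := by
        refine mul_le_mul_of_nonneg_left (integral_mono_on_of_nonneg ht ?_ ?_ ?_) ha
        · exact Continuous.intervalIntegrable (by fun_prop) _ _
        · exact fun s _ => by positivity
        · exact fun s hs => mul_le_mul_of_nonneg_left (hw s hs) (exp_pos _).le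
    _ = a / (b - a) * C * (exp (b * (t - t₀)) - exp (a * (t - t₀))) := by
        simp_rw [mul_left_comm _ C]
        rw [integral_const_mul, integral_exp_mul_sub_mul_exp_mul_sub hab.ne]
        ring
    _ ≤ a / (b - a) * C * exp (b * (t - t₀)) :=
        mul_le_mul_of_nonneg_left (sub_le_self _ (exp_pos _).le) hcoef

theorem div_mul_pow_div_factorial_add {k n N : ℕ} (h : k + (n + 1) = N) :
    (k : ℝ) / (n + 1) * (N ^ n / n.factorial) + N ^ n / n.factorial =
      N ^ (n + 1) / (n + 1).factorial := by
  rw [← h]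
  push_cast [Nat.factorial_succ]
  field_simp
  ring

theorem stmt_0_general (N : ℕ) (hN : 2 ≤ N) (D₁ t₀ : ℝ) (hD₁ : 0 < D₁)
    (v : ℕ → ℝ → ℝ)
    (hineq : ∀ k, 1 ≤ k → k ≤ N → ∀ t, t₀ ≤ t →
      v k t ≤ D₁ * k * ∫ s in t₀..t, Real.exp (D₁ * k * (t - s)) *
        ((∑ l ∈ Finset.Icc (k+1) N, v l s) + 1)) :
    ∀ n, n ≤ N - 2 → ∀ t, t₀ ≤ t →
      (∑ l ∈ Finset.Icc (N - n) N, v l t) + 1 ≤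
        (N : ℝ) ^ n / (Nat.factorial n) * Real.exp (D₁ * N * (t - t₀)) := by
  intro n
  induction n with
  | zero =>
    intro _ t ht
    have hvN := hineq N (by omega) le_rfl t ht
    simp only [Finset.Icc_eq_empty_of_lt (Nat.lt_succ_self N), Finset.sum_empty, zero_add,
      mul_one, mul_integral_exp_mul_sub] at hvN
    simp only [Nat.sub_zero, Finset.Icc_self, Finset.sum_singleton, pow_zero, Nat.factorial_zero,
      Nat.cast_one, div_one, one_mul]
    linarith
  | succ n ih =>
    intro hn t ht
    set k := N - (n + 1)
    have hkN : k + (n + 1) = N := by omega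
    have hcast : (N : ℝ) = k + (n + 1) := by exact_mod_cast hkN.symm
    have hvk : v k t ≤ k / (n + 1) * (N ^ n / n.factorial) * exp (D₁ * N * (t - t₀)) := by
      calc v k t ≤ _ := hineq k (by omega) (by omega) t ht
        _ ≤ D₁ * k / (D₁ * N - D₁ * k) * (N ^ n / n.factorial) * exp (D₁ * N * (t - t₀)) := by
          rw [show k + 1 = N - n by omega]
          refine mul_integral_exp_mul_sub_mul_le (by positivity) ?_ ht (by positivity)
            fun s hs => ih (by omega) s hs.1
          exact mul_lt_mul_of_pos_left (Nat.cast_lt.2 (by omega)) hD₁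
        _ = _ := by rw [hcast]; field_simp; ring
    rw [Finset.Icc_eq_cons_Ioc (by omega : k ≤ N), Finset.sum_cons,
      ← Finset.Icc_add_one_left_eq_Ioc, show k + 1 = N - n by omega,
      ← div_mul_pow_div_factorial_add hkN]
    linarith [ih (by omega) t ht]

theorem stmt_0 (N : ℕ) (hN : 2 ≤ N) (D₁ t₀ : ℝ) (hD₁ : 0 < D₁)
    (v : ℕ → ℝ → ℝ)
    (hcont : ∀ k, 1 ≤ k → k ≤ N → ContinuousOn (v k) (Set.Ici t₀))
    (hnonneg : ∀ k, 1 ≤ k → k ≤ N → ∀ t, t₀ ≤ t → 0 ≤ v k t)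
    (hineq : ∀ k, 1 ≤ k → k ≤ N → ∀ t, t₀ ≤ t →
      v k t ≤ D₁ * k * ∫ s in t₀..t, Real.exp (D₁ * k * (t - s)) *
        ((∑ l ∈ Finset.Icc (k+1) N, v l s) + 1)) :
    ∀ n, n ≤ N - 2 → ∀ t, t₀ ≤ t →
      (∑ l ∈ Finset.Icc (N - n) N, v l t) + 1 ≤
        (N : ℝ) ^ n / (Nat.factorial n) * Real.exp (D₁ * N * (t - t₀)) :=
  stmt_0_general N hN D₁ t₀ hD₁ v hineq
end

section
/- Let 0 < ε₀ < 1, η₀ ≥ 0, η₁ > 0 satisfy (1+η₁)ε₀² - (η₀+η₁)ε₀ + η₀ = 0 with ε₀ the larger root, and suppose (1-ε₀)/ε₀ ≥ 1/η₁ and η₁ε₀ - η₀(1-ε₀) > 0 with η₁ε₀ - η₀(1-ε₀) = ε₀(ε₀ + η₀(1-ε₀))/(1-ε₀). If nonnegative reals W_0, W_1, ..., W_{N+1} satisfy W_0 = 0, W_{N+1} = 1, and W_k ≤ (1/η₁) ∑_{l=k+1}^{N+1} W_l + (η₀/η₁) W_{k-1} for 1 ≤ k ≤ N, then W_k ≤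 ((1-ε₀)/ε₀) ∑_{l=k+1}^{N+1} W_l for all 1 ≤ k ≤ N. -/
/-!
Put `r = (1 - ε₀)/ε₀` and `T k = ∑_{l=k+1}^{N+1} W l`, and prove `W k ≤ r T k` by induction from
`k = 0`, where it holds because `W 0 = 0`. If `W k ≤ r (W (k+1) + T (k+1))`, the recursion gives
`η₁ W (k+1) ≤ T (k+1) + η₀ r (W (k+1) + T (k+1))`, and this forces `W (k+1) ≤ r T (k+1)` as soon as
`1 + η₀ r (1 + r) ≤ η₁ r`. Multiplied by `ε₀²`, this inequality is `(1+η₁)ε₀² - (η₀+η₁)ε₀ + η₀ ≤ 0`,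
so the root `ε₀` makes `r` exactly the fixed point of the induction step.
-/

open Finset

section TailSumBound

variable {c d r : ℝ}

lemma le_mul_of_le_mul_add_of_le_add_mul (hc : 0 ≤ c) (hd : 0 ≤ d) (hr : 0 ≤ r)
    (hcdr : c + d * r * (1 + r) ≤ r) {w a S : ℝ} (hS : 0 ≤ S)
    (hw : w ≤ r * (a + S)) (ha : a ≤ c * S + d * w) : a ≤ r * S := by
  have hstep : a ≤ c * S + d * r * (a + S) := by
    calc a ≤ c * S + d * w := ha
      _ ≤ c * S + d * (r * (a + S)) := by gcongr
      _ = c * S + d * r * (a + S) := by ring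
  have hdr : d * r < 1 := by nlinarith [mul_nonneg hd hr]
  have hprod : (1 - d * r) * (a - r * S) ≤ 0 := by nlinarith [mul_le_mul_of_nonneg_right hcdr hS]
  exact sub_nonpos.mp (nonpos_of_mul_nonpos_right hprod (by linarith))

lemma le_mul_sum_Icc_of_le_mul_sum_Icc_add (hc : 0 ≤ c) (hd : 0 ≤ d) (hr : 0 ≤ r)
    (hcdr : c + d * r * (1 + r) ≤ r) {N : ℕ} {W : ℕ → ℝ} (hW : ∀ k, 0 ≤ W k) (hW0 : W 0 = 0)
    (hrec : ∀ k, 1 ≤ k → k ≤ N →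
      W k ≤ c * ∑ l ∈ Icc (k + 1) (N + 1), W l + d * W (k - 1)) :
    ∀ k ≤ N, W k ≤ r * ∑ l ∈ Icc (k + 1) (N + 1), W l := by
  have hT : ∀ k, 0 ≤ ∑ l ∈ Icc (k + 1) (N + 1), W l := fun k => sum_nonneg fun l _ => hW l
  intro k
  induction k with
  | zero => intro _; simpa [hW0] using mul_nonneg hr (hT 0)
  | succ k ih =>
    intro hk
    have hsplit : ∑ l ∈ Icc (k + 1) (N + 1), W l
        = W (k + 1) + ∑ l ∈ Icc (k + 1 + 1) (N + 1), W l := by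
      rw [← add_sum_Ioc_eq_sum_Icc (by omega), ← Icc_add_one_left_eq_Ioc]
    refine le_mul_of_le_mul_add_of_le_add_mul hc hd hr hcdr (hT (k + 1)) ?_ ?_ (w := W k)
    · simpa only [hsplit] using ih (by omega)
    · simpa using hrec (k + 1) (by omega) hk

end TailSumBound

lemma inv_add_div_mul_mul_one_add_le {ε₀ η₀ η₁ : ℝ} (hε₀ : 0 < ε₀) (hη₁ : 0 < η₁)
    (hroot : (1 + η₁) * ε₀ ^ 2 - (η₀ + η₁) * ε₀ + η₀ ≤ 0) :
    1 / η₁ + η₀ / η₁ * ((1 - ε₀) / ε₀) * (1 + (1 - ε₀) / ε₀) ≤ (1 - ε₀) / ε₀ := by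
  have hexpr : (1 - ε₀) / ε₀ - (1 / η₁ + η₀ / η₁ * ((1 - ε₀) / ε₀) * (1 + (1 - ε₀) / ε₀))
      = (η₁ * ε₀ * (1 - ε₀) - (ε₀ ^ 2 + η₀ * (1 - ε₀))) / (η₁ * ε₀ ^ 2) := by
    field_simp
    ring
  rw [← sub_nonneg, hexpr]
  exact div_nonneg (by linarith) (by positivity)

theorem stmt_1_general (N : ℕ) (ε₀ η₀ η₁ : ℝ)
    (hε₀ : 0 < ε₀) (hε₀1 : ε₀ < 1) (hη₀ : 0 ≤ η₀) (hη₁ : 0 < η₁)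
    (hroot : (1+η₁) * ε₀^2 - (η₀+η₁) * ε₀ + η₀ = 0)
    (W : ℕ → ℝ) (hWnn : ∀ k, 0 ≤ W k) (hW0 : W 0 = 0)
    (hWrec : ∀ k, 1 ≤ k → k ≤ N →
      W k ≤ (1/η₁) * ∑ l ∈ Finset.Icc (k+1) (N+1), W l + (η₀/η₁) * W (k-1)) :
    ∀ k, 1 ≤ k → k ≤ N →
      W k ≤ ((1-ε₀)/ε₀) * ∑ l ∈ Finset.Icc (k+1) (N+1), W l := by
  have hbound := le_mul_sum_Icc_of_le_mul_sum_Icc_add (by positivity) (by positivity)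
    (div_nonneg (by linarith) hε₀.le) (inv_add_div_mul_mul_one_add_le hε₀ hη₁ hroot.le)
    hWnn hW0 hWrec
  exact fun k _ hk => hbound k hk

theorem stmt_1 (N : ℕ) (hN : 1 ≤ N) (ε₀ η₀ η₁ : ℝ)
    (hε₀ : 0 < ε₀) (hε₀1 : ε₀ < 1) (hη₀ : 0 ≤ η₀) (hη₁ : 0 < η₁)
    (hroot : (1+η₁) * ε₀^2 - (η₀+η₁) * ε₀ + η₀ = 0)
    (hlarger : ∀ s : ℝ, (1+η₁) * s^2 - (η₀+η₁) * s + η₀ = 0 → s ≤ ε₀)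
    (h1 : 1/η₁ ≤ (1-ε₀)/ε₀)
    (h2 : 0 < η₁*ε₀ - η₀*(1-ε₀))
    (h3 : η₁*ε₀ - η₀*(1-ε₀) = ε₀*(ε₀ + η₀*(1-ε₀))/(1-ε₀))
    (W : ℕ → ℝ) (hWnn : ∀ k, 0 ≤ W k) (hW0 : W 0 = 0) (hWN1 : W (N+1) = 1)
    (hWrec : ∀ k, 1 ≤ k → k ≤ N →
      W k ≤ (1/η₁) * ∑ l ∈ Finset.Icc (k+1) (N+1), W l + (η₀/η₁) * W (k-1)) :
    ∀ k, 1 ≤ k → k ≤ N →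
      W k ≤ ((1-ε₀)/ε₀) * ∑ l ∈ Finset.Icc (k+1) (N+1), W l :=
  stmt_1_general N ε₀ η₀ η₁ hε₀ hε₀1 hη₀ hη₁ hroot W hWnn hW0 hWrec
end

section
/- Let x(t) be a solution on [t_0,∞) of ẋ = f(t,x) in ℝ^d where f(t,x) = ∑_{|α|≥1} f_α(t) x^α is analytic with coefficients satisfying sup_{t≥t_0} ∑_{j=1}^d ∑_{|α|=k} |f_{j,α}(t)| ≤ D₀ R^{-k} for all k ≥ 1. Suppose 0 < ‖x₀‖_∞ < R/e and define M₀ = ‖x₀‖_∞^{(e-1)/(2e-1)} (R/e)^{e/(2e-1)} and T* = ((e-1)R/((2e-1)D₀)) ln(R/(e‖x₀‖_∞)). Then M₀ < R/e and ‖x(t)‖_∞ ≤ M₀ for all t_0 ≤ t ≤ t_0 + T*. -/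
/-!
Shell by shell (`|α| = k`) the series for `f(t, x)` is dominated by the geometric series
`∑_{k ≥ 1} D₀ (‖x‖/R)^k`, so `‖f(t, x)‖ ≤ D₀ ‖x‖ / (R - ‖x‖)`. While `‖x‖ ≤ M₀ < R/e` this gives
`‖ẋ‖ ≤ K ‖x‖` with `K = D₀ / (R - R/e)`, and Grönwall yields `‖x(t)‖ ≤ ‖x₀‖ e^{K (t - t₀)}`.
The time `T*` is exactly the one at which this bound reaches `M₀`, and a first-exit argument
shows that the solution cannot leave the ball `‖x‖ ≤ M₀` before then.
-/

open Set Real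

lemma finite_setOf_sum_eq (d k : ℕ) : {α : Fin d → ℕ | ∑ i, α i = k}.Finite := by
  convert (Finset.Nat.antidiagonalTuple d k).finite_toSet
  ext α
  simp [Finset.Nat.mem_antidiagonalTuple]

lemma summable_and_tsum_le_of_fiberwise_le {β γ : Type*} {H : β → ℝ} (hH : 0 ≤ H)
    (g : β → γ) (hfin : ∀ k, (g ⁻¹' {k}).Finite) {b : γ → ℝ} (hb : Summable b)
    (hle : ∀ k, ∑' x : g ⁻¹' {k}, H x ≤ b k) :
    Summable H ∧ ∑' x, H x ≤ ∑' k, b k := by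
  have hfiber : ∀ k, Summable fun x : g ⁻¹' {k} => H x := fun k =>
    have := (hfin k).to_subtype; Summable.of_finite
  have hsum : Summable H := by
    refine (summable_partition hH (s := fun k => g ⁻¹' {k}) (by simp)).2 ⟨hfiber, ?_⟩
    exact hb.of_nonneg_of_le (fun k => tsum_nonneg fun x => hH x) hle
  refine ⟨hsum, ?_⟩
  rw [← (hsum.hasSum.tsum_fiberwise g).tsum_eq]
  exact (hsum.hasSum.tsum_fiberwise g).summable.tsum_le_tsum hle hb

lemma summable_and_tsum_abs_mul_pow_le {d : ℕ} {C R M : ℝ} (a : (Fin d → ℕ) → ℝ)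
    (hC : 0 ≤ C) (hM : 0 ≤ M) (hMR : M < R)
    (hdecay : ∀ k : ℕ, 1 ≤ k → ∑' α : {α : Fin d → ℕ // ∑ i, α i = k}, |a α.1| ≤ C / R ^ k) :
    Summable (fun α : {α : Fin d → ℕ // 1 ≤ ∑ i, α i} => |a α.1| * M ^ ∑ i, α.1 i) ∧
      ∑' α : {α : Fin d → ℕ // 1 ≤ ∑ i, α i}, |a α.1| * M ^ ∑ i, α.1 i ≤ C * M / (R - M) := by
  have hR : 0 < R := hM.trans_lt hMR
  have hr : 0 ≤ M / R := by positivity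
  have hr1 : M / R < 1 := (div_lt_one hR).2 hMR
  set H := {α : Fin d → ℕ | 1 ≤ ∑ i, α i}.indicator fun α => |a α| * M ^ ∑ i, α i
  set b : ℕ → ℝ := fun k => if k = 0 then 0 else C * (M / R) ^ k
  have hgeom : Summable fun k => C * (M / R) ^ k :=
    (summable_geometric_of_lt_one hr hr1).mul_left C
  have hb : Summable b := hgeom.of_nonneg_of_le (fun k => by positivity)
    (fun k => by dsimp only [b]; split_ifs <;> [positivity; exact le_rfl])
  have hbsum : ∑' k, b k = C * M / (R - M) := by
    have hshift : ∀ k, b (k + 1) = C * (M / R) * (M / R) ^ k := fun k => by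
      simp only [b, Nat.add_one_ne_zero, if_false, pow_succ]; ring
    rw [hb.tsum_eq_zero_add, tsum_congr hshift, tsum_mul_left, tsum_geometric_of_lt_one hr hr1]
    simp only [b, if_true, zero_add]
    field_simp
  have hle : ∀ k, ∑' α : (fun α : Fin d → ℕ => ∑ i, α i) ⁻¹' {k}, H α ≤ b k := by
    intro k
    rcases Nat.eq_zero_or_pos k with rfl | hk
    · have hzero : ∀ α : (fun α : Fin d → ℕ => ∑ i, α i) ⁻¹' {0}, H α = 0 := by
        rintro ⟨α, hα : ∑ i, α i = 0⟩
        exact Set.indicator_of_notMem (by simp [hα]) _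
      simp [tsum_congr hzero, b]
    · have hfib : ∀ α : (fun α : Fin d → ℕ => ∑ i, α i) ⁻¹' {k}, H α = |a α| * M ^ k := by
        rintro ⟨α, rfl : ∑ i, α i = k⟩
        exact Set.indicator_of_mem (show α ∈ {α : Fin d → ℕ | 1 ≤ ∑ i, α i} from hk) _
      calc ∑' α : (fun α : Fin d → ℕ => ∑ i, α i) ⁻¹' {k}, H α
          = (∑' α : {α : Fin d → ℕ // ∑ i, α i = k}, |a α.1|) * M ^ k := by
            rw [tsum_congr hfib, tsum_mul_right]; rfl
        _ ≤ C / R ^ k * M ^ k := by gcongr; exact hdecay k hk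
        _ = b k := by simp [b, hk.ne', div_pow]; ring
  obtain ⟨hsum, htsum⟩ := summable_and_tsum_le_of_fiberwise_le
    (Set.indicator_nonneg fun α _ => by positivity) _ (finite_setOf_sum_eq d) hb hle
  exact ⟨summable_subtype_iff_indicator.2 hsum, (tsum_subtype _ _).trans_le (htsum.trans_eq hbsum)⟩

noncomputable def powerSeriesField {d : ℕ} (a : (Fin d → ℕ) → Fin d → ℝ) (v : Fin d → ℝ) :
    Fin d → ℝ :=
  fun j => ∑' α : {α : Fin d → ℕ // 1 ≤ ∑ i, α i}, a α.1 j * ∏ i, v i ^ α.1 i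

lemma abs_prod_pow_le_norm_pow {d : ℕ} (v : Fin d → ℝ) (α : Fin d → ℕ) :
    |∏ i, v i ^ α i| ≤ ‖v‖ ^ ∑ i, α i := by
  rw [← Finset.prod_pow_eq_pow_sum, Finset.abs_prod]
  gcongr with i
  rw [abs_pow]
  exact pow_le_pow_left₀ (abs_nonneg _) (norm_le_pi_norm v i) _

lemma norm_powerSeriesField_le {d : ℕ} {C R : ℝ} (a : (Fin d → ℕ) → Fin d → ℝ) (hC : 0 ≤ C)
    (hdecay : ∀ k : ℕ, 1 ≤ k →
      ∑ j, ∑' α : {α : Fin d → ℕ // ∑ i, α i = k}, |a α.1 j| ≤ C / R ^ k)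
    {v : Fin d → ℝ} (hv : ‖v‖ < R) :
    ‖powerSeriesField a v‖ ≤ C * ‖v‖ / (R - ‖v‖) := by
  have hbound : ∀ j, |powerSeriesField a v j| ≤ C * ‖v‖ / (R - ‖v‖) := by
    intro j
    have hdecay_j : ∀ k : ℕ, 1 ≤ k →
        ∑' α : {α : Fin d → ℕ // ∑ i, α i = k}, |a α.1 j| ≤ C / R ^ k := fun k hk =>
      (Finset.single_le_sum (fun j _ => tsum_nonneg fun α => abs_nonneg _)
        (Finset.mem_univ j)).trans (hdecay k hk)
    obtain ⟨hsum, hle⟩ :=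
      summable_and_tsum_abs_mul_pow_le (fun α => a α j) hC (norm_nonneg v) hv hdecay_j
    have hterm : ∀ α : {α : Fin d → ℕ // 1 ≤ ∑ i, α i},
        ‖a α.1 j * ∏ i, v i ^ α.1 i‖ ≤ |a α.1 j| * ‖v‖ ^ ∑ i, α.1 i := fun α => by
      rw [Real.norm_eq_abs, abs_mul]
      exact mul_le_mul_of_nonneg_left (abs_prod_pow_le_norm_pow v α.1) (abs_nonneg _)
    rw [← Real.norm_eq_abs]
    exact (tsum_of_norm_bounded hsum.hasSum hterm).trans hle
  refine (pi_norm_le_iff_of_nonneg ?_).2 fun j => (Real.norm_eq_abs _).trans_le (hbound j)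
  exact div_nonneg (mul_nonneg hC (norm_nonneg v)) (sub_nonneg.2 hv.le)

lemma norm_le_of_norm_deriv_right_le_of_norm_le {E : Type*} [NormedAddCommGroup E]
    [NormedSpace ℝ E] {f f' : ℝ → E} {a b δ K M : ℝ}
    (hf : ContinuousOn f (Icc a b)) (hf' : ∀ t ∈ Ico a b, HasDerivWithinAt f (f' t) (Ici t) t)
    (ha : ‖f a‖ ≤ δ) (hδ : 0 < δ) (hK : 0 < K)
    (bound : ∀ t ∈ Ico a b, ‖f t‖ ≤ M → ‖f' t‖ ≤ K * ‖f t‖)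
    (hM : δ * exp (K * (b - a)) ≤ M) :
    ∀ t ∈ Icc a b, ‖f t‖ ≤ M := by
  by_contra! ⟨t₁, ht₁, hMt₁⟩
  set Q := {t ∈ Icc a b | M ≤ ‖f t‖}
  have hQ : IsClosed Q :=
    hf.norm.preimage_isClosed_of_isClosed isClosed_Icc isClosed_Ici
  have hQbdd : BddBelow Q := ⟨a, fun t ht => ht.1.1⟩
  have ht₁Q : t₁ ∈ Q := ⟨ht₁, hMt₁.le⟩
  obtain ⟨⟨has, hsb⟩, hMs⟩ : sInf Q ∈ Q := hQ.csInf_mem ⟨t₁, ht₁Q⟩ hQbdd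
  set s := sInf Q
  have hbelow : ∀ t ∈ Ico a s, ‖f t‖ ≤ M := fun t ht =>
    not_lt.1 fun hMt => (csInf_le hQbdd ⟨⟨ht.1, ht.2.le.trans hsb⟩, hMt.le⟩).not_gt ht.2
  have hgron := norm_le_gronwallBound_of_norm_deriv_right_le (ε := 0)
    (hf.mono (Icc_subset_Icc_right hsb)) (fun t ht => hf' t ⟨ht.1, ht.2.trans_le hsb⟩) ha
    (fun t ht => (add_zero (K * ‖f t‖)).symm ▸ bound t ⟨ht.1, ht.2.trans_le hsb⟩ (hbelow t ht))
    s ⟨has, le_rfl⟩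
  rw [gronwallBound_ε0] at hgron
  -- `δ e^{K (t - a)}` is strictly increasing, so a first exit before `b` is impossible.
  rcases hsb.lt_or_eq with hsb | hsb
  · have : δ * exp (K * (s - a)) < δ * exp (K * (b - a)) := by gcongr
    linarith
  · have hst₁ : s = t₁ := le_antisymm (csInf_le hQbdd ht₁Q) (hsb ▸ ht₁.2)
    have : ‖f t₁‖ ≤ δ * exp (K * (b - a)) := by rw [← hst₁, ← hsb]; exact hgron
    linarith

lemma rpow_mul_rpow_lt {a b p q : ℝ} (ha : 0 ≤ a) (hab : a < b) (hp : 0 < p) (hpq : p + q = 1) :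
    a ^ p * b ^ q < b := by
  have hb : 0 < b := ha.trans_lt hab
  calc a ^ p * b ^ q < b ^ p * b ^ q := by gcongr
    _ = b := by rw [← rpow_add hb, hpq, rpow_one]

lemma mul_div_rpow_eq {a b p q : ℝ} (ha : 0 < a) (hb : 0 ≤ b) (hpq : p + q = 1) :
    a * (b / a) ^ q = a ^ p * b ^ q := by
  rw [div_rpow hb ha.le, eq_sub_of_add_eq hpq, rpow_sub ha, rpow_one]
  field_simp

theorem stmt_7_general (d : ℕ) (t₀ D₀ R : ℝ) (hD₀ : 0 < D₀) (hR : 0 < R)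
    (c : (Fin d → ℕ) → ℝ → Fin d → ℝ)
    (hdecay : ∀ k : ℕ, 1 ≤ k → ∀ t, t₀ ≤ t →
      ∑ j, ∑' α : {α : Fin d → ℕ // ∑ i, α i = k}, |c α.1 t j| ≤ D₀ / R ^ k)
    (x : ℝ → (Fin d → ℝ)) (x₀ : Fin d → ℝ)
    (hx0 : x t₀ = x₀) (hx₀pos : 0 < ‖x₀‖)
    (hode : ∀ t, t₀ ≤ t → HasDerivAt x
      (fun j => ∑' α : {α : Fin d → ℕ // 1 ≤ ∑ i, α i},
        c α.1 t j * ∏ i, (x t i) ^ (α.1 i)) t)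
    (hsmall : ‖x₀‖ < R / Real.exp 1) :
    (let e := Real.exp 1
     let M₀ := ‖x₀‖ ^ ((e-1)/(2*e-1)) * (R/e) ^ (e/(2*e-1))
     let T := ((e-1)*R/((2*e-1)*D₀)) * Real.log (R/(e*‖x₀‖))
     M₀ < R/e ∧ ∀ t, t₀ ≤ t → t ≤ t₀ + T → ‖x t‖ ≤ M₀) := by
  intro e M₀ T
  have he : 1 < e := one_lt_exp_iff.2 one_pos
  have he' : 0 < 2 * e - 1 := by linarith
  have hpq : (e - 1) / (2 * e - 1) + e / (2 * e - 1) = 1 := by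
    rw [← add_div, div_eq_one_iff_eq he'.ne']; ring
  have hM₀ : M₀ < R / e :=
    rpow_mul_rpow_lt (norm_nonneg x₀) hsmall (div_pos (sub_pos.2 he) he') hpq
  refine ⟨hM₀, fun t ht₀ htT => ?_⟩
  set K := D₀ / (R - R / e)
  have hRe : R / e < R := div_lt_self hR he
  have hK : 0 < K := div_pos hD₀ (sub_pos.2 hRe)
  have hKT : ‖x₀‖ * exp (K * (t₀ + T - t₀)) = M₀ := by
    have hlog : K * (t₀ + T - t₀) = log ((R / e) / ‖x₀‖) * (e / (2 * e - 1)) := by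
      have : e - 1 ≠ 0 := (sub_pos.2 he).ne'
      simp only [K, T, add_sub_cancel_left, div_div, mul_comm e]
      field_simp
    rw [hlog, ← rpow_def_of_pos (by positivity), mul_div_rpow_eq hx₀pos (by positivity) hpq]
  have hbound : ∀ u ∈ Ico t₀ (t₀ + T), ‖x u‖ ≤ M₀ →
      ‖powerSeriesField (fun α => c α u) (x u)‖ ≤ K * ‖x u‖ := by
    intro u hu hxu
    have hxR : ‖x u‖ < R / e := hxu.trans_lt hM₀
    calc _ ≤ D₀ * ‖x u‖ / (R - ‖x u‖) :=
          norm_powerSeriesField_le _ hD₀.le (fun k hk => hdecay k hk u hu.1) (hxR.trans hRe)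
      _ ≤ D₀ * ‖x u‖ / (R - R / e) := by gcongr
      _ = K * ‖x u‖ := by ring
  exact norm_le_of_norm_deriv_right_le_of_norm_le
    (fun u hu => (hode u hu.1).continuousAt.continuousWithinAt)
    (fun u hu => (hode u hu.1).hasDerivWithinAt) (hx0 ▸ le_rfl) hx₀pos hK hbound hKT.le
    t ⟨ht₀, htT⟩

theorem stmt_7 (d : ℕ) (hd : 1 ≤ d) (t₀ D₀ R : ℝ) (hD₀ : 0 < D₀) (hR : 0 < R)
    (c : (Fin d → ℕ) → ℝ → Fin d → ℝ)
    (hzero : ∀ t, c 0 t = 0)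
    (hdecay : ∀ k : ℕ, 1 ≤ k → ∀ t, t₀ ≤ t →
      ∑ j, ∑' α : {α : Fin d → ℕ // ∑ i, α i = k}, |c α.1 t j| ≤ D₀ / R ^ k)
    (x : ℝ → (Fin d → ℝ)) (x₀ : Fin d → ℝ)
    (hx0 : x t₀ = x₀) (hx₀pos : 0 < ‖x₀‖)
    (hode : ∀ t, t₀ ≤ t → HasDerivAt x
      (fun j => ∑' α : {α : Fin d → ℕ // 1 ≤ ∑ i, α i},
        c α.1 t j * ∏ i, (x t i) ^ (α.1 i)) t)
    (hsmall : ‖x₀‖ < R / Real.exp 1) :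
    (let e := Real.exp 1
     let M₀ := ‖x₀‖ ^ ((e-1)/(2*e-1)) * (R/e) ^ (e/(2*e-1))
     let T := ((e-1)*R/((2*e-1)*D₀)) * Real.log (R/(e*‖x₀‖))
     M₀ < R/e ∧ ∀ t, t₀ ≤ t → t ≤ t₀ + T → ‖x t‖ ≤ M₀) :=
  stmt_7_general d t₀ D₀ R hD₀ hR c hdecay x x₀ hx0 hx₀pos hode hsmall
end

section
/- Under Assumption 1 (sup_{t≥t_0} ∑_{j=1}^d ∑_{α∈Z_k^d} |f_{j,α}(t)| ≤ D₀ R^{-k} for all k ≥ 1), the Carleman block matrices satisfy sup_{t≥t_0} ‖A_{k,l}(t)‖_{S(Z_k^d, Z_l^d)} ≤ D₀ k R^{k-l-1} for all 1 ≤ k ≤ l, where ‖·‖_S denotes the Schur norm. -/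
/-!
Bounding each entry `|∑ⱼ αⱼ f_{j,β-α+eⱼ}|` by `k ∑ⱼ |f_{j,β-α+eⱼ}|` (as `αⱼ ≤ |α| = k`) reduces both
Schur sums to `k ∑ⱼ ∑_γ |f_{j,γ}|`, where `γ = β - α + eⱼ` runs, injectively in `β` (resp. `α`),
through integer vectors of degree `l - k + 1`. Since `f_{j,γ}` vanishes off `ℤ₊ᵈ`, such a sum is at
most the corresponding sum over `Z_{l-k+1}^d`, which Assumption 1 bounds by `D₀ R^{k-l-1}`.
-/

open Finset Function

abbrev MultiIndex (d m : ℕ) : Type := {α : Fin d → ℕ // ∑ i, α i = m}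

instance (d m : ℕ) : Fintype (MultiIndex d m) :=
  Fintype.subtype (Nat.antidiagonalTuple d m) fun _ => Nat.mem_antidiagonalTuple

namespace MultiIndex

variable {d m : ℕ}

lemma apply_le (α : MultiIndex d m) (j : Fin d) : α.1 j ≤ m :=
  (single_le_sum (fun i _ => Nat.zero_le (α.1 i)) (mem_univ j)).trans_eq α.2

lemma toInt_injective : Injective fun (α : MultiIndex d m) i => (α.1 i : ℤ) :=
  fun _ _ h => Subtype.ext <| funext fun i => Nat.cast_injective (congrFun h i)

lemma sum_abs_comp_le {ι : Type*} [Fintype ι] (F : (Fin d → ℤ) → ℝ)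
    (hF : ∀ γ, ¬ (∀ i, 0 ≤ γ i) → F γ = 0) (g : ι → Fin d → ℤ) (hg : Injective g)
    (hgm : ∀ x, ∑ i, g x i = m) :
    ∑ x, |F (g x)| ≤ ∑ γ : MultiIndex d m, |F fun i => (γ.1 i : ℤ)| := by
  set f : (Fin d → ℤ) → ℝ := fun γ => if ∑ i, γ i = m then |F γ| else 0
  have hrange : ∀ γ, f γ ≠ 0 → γ ∈ Set.range fun (α : MultiIndex d m) i => (α.1 i : ℤ) := by
    intro γ hγ
    obtain ⟨hsum, hFγ⟩ : ∑ i, γ i = m ∧ F γ ≠ 0 := by simpa [f] using hγ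
    have hnonneg : ∀ i, 0 ≤ γ i := by_contra fun h => hFγ (hF γ h)
    refine ⟨⟨fun i => (γ i).toNat, ?_⟩, funext fun i => Int.toNat_of_nonneg (hnonneg i)⟩
    zify
    simpa only [Int.toNat_of_nonneg (hnonneg _)] using hsum
  have hsummable : Summable f :=
    (toInt_injective.summable_iff fun γ hγ => by_contra fun h => hγ (hrange γ h)).1
      Summable.of_finite
  calc ∑ x, |F (g x)| = ∑' x, f (g x) := by simp only [tsum_fintype, f, hgm, if_true]
    _ ≤ ∑' γ, f γ := tsum_comp_le_tsum_of_inj hsummable (fun _ => by positivity) hg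
    _ = ∑ α : MultiIndex d m, |F fun i => (α.1 i : ℤ)| := by
      rw [← toInt_injective.tsum_eq hrange, tsum_fintype]
      exact sum_congr rfl fun α _ => by simp only [f, ← Nat.cast_sum, α.2, if_true]

lemma sum_abs_sum_mul_le {ι : Type*} [Fintype ι] (c : Fin d → (Fin d → ℤ) → ℝ)
    (hc : ∀ j γ, ¬ (∀ i, 0 ≤ γ i) → c j γ = 0) (w : ι → Fin d → ℕ) (K : ℕ)
    (hw : ∀ x j, w x j ≤ K) (g : Fin d → ι → Fin d → ℤ) (hg : ∀ j, Injective (g j))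
    (hgm : ∀ j x, ∑ i, g j x i = m) :
    ∑ x, |∑ j, (w x j : ℝ) * c j (g j x)|
      ≤ K * ∑ j, ∑ γ : MultiIndex d m, |c j fun i => (γ.1 i : ℤ)| :=
  calc ∑ x, |∑ j, (w x j : ℝ) * c j (g j x)|
      ≤ ∑ x, ∑ j, (K : ℝ) * |c j (g j x)| := by
        refine sum_le_sum fun x _ => (abs_sum_le_sum_abs _ _).trans <| sum_le_sum fun j _ => ?_
        rw [abs_mul, Nat.abs_cast]
        gcongr
        exact hw x j
    _ = K * ∑ j, ∑ x, |c j (g j x)| := by simp only [mul_sum, sum_comm (γ := Fin d)]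
    _ ≤ K * ∑ j, ∑ γ : MultiIndex d m, |c j fun i => (γ.1 i : ℤ)| := by
        gcongr with j
        exact sum_abs_comp_le (c j) (hc j) (g j) (hg j) (hgm j)

def shift (β α : Fin d → ℕ) (j : Fin d) : Fin d → ℤ :=
  fun i => (β i : ℤ) - α i + if i = j then 1 else 0

lemma sum_shift {k : ℕ} {β α : Fin d → ℕ} (hβ : ∑ i, β i = k + m) (hα : ∑ i, α i = k)
    (j : Fin d) : ∑ i, shift β α j i = (m + 1 : ℕ) := by
  simp only [shift, sum_add_distrib, sum_sub_distrib, ← Nat.cast_sum, hβ, hα, sum_ite_eq',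
    mem_univ, if_true]
  push_cast
  ring

lemma shift_injective_left (α : Fin d → ℕ) (j : Fin d) :
    Injective fun β : MultiIndex d m => shift β.1 α j :=
  fun _ _ h => Subtype.ext <| funext fun i => by simpa [shift] using congrFun h i

lemma shift_injective_right (β : Fin d → ℕ) (j : Fin d) :
    Injective fun α : MultiIndex d m => shift β α.1 j :=
  fun _ _ h => Subtype.ext <| funext fun i => by simpa [shift] using congrFun h i

end MultiIndex

theorem stmt_12_general (d : ℕ) (t₀ D₀ R : ℝ)
    (c : Fin d → (Fin d → ℤ) → ℝ → ℝ)
    (hsupp : ∀ (j : Fin d) (γ : Fin d → ℤ) (t : ℝ),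
      ¬ ((∀ i, 0 ≤ γ i) ∧ γ ≠ 0) → c j γ t = 0)
    (hdecay : ∀ m : ℕ, 1 ≤ m → ∀ t, t₀ ≤ t →
      ∑ j, ∑' γ : {γ : Fin d → ℕ // ∑ i, γ i = m},
        |c j (fun i => (γ.1 i : ℤ)) t| ≤ D₀ / R ^ m)
    (k l : ℕ) (hkl : k ≤ l) (t : ℝ) (ht : t₀ ≤ t) :
    (∀ α : Fin d → ℕ, ∑ i, α i = k →
      ∑' β : {β : Fin d → ℕ // ∑ i, β i = l},
        |∑ j, (α j : ℝ) *
          c j (fun i => (β.1 i : ℤ) - (α i : ℤ) + if i = j then 1 else 0) t|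
        ≤ D₀ * k * R ^ ((k : ℤ) - l - 1)) ∧
    (∀ β : Fin d → ℕ, ∑ i, β i = l →
      ∑' α : {α : Fin d → ℕ // ∑ i, α i = k},
        |∑ j, (α.1 j : ℝ) *
          c j (fun i => (β i : ℤ) - (α.1 i : ℤ) + if i = j then 1 else 0) t|
        ≤ D₀ * k * R ^ ((k : ℤ) - l - 1)) := by
  open MultiIndex in
  obtain ⟨m, rfl⟩ : ∃ m, l = k + m := ⟨l - k, by omega⟩
  have hrate : D₀ * k * R ^ ((k : ℤ) - (k + m : ℕ) - 1) = k * (D₀ / R ^ (m + 1)) := by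
    rw [show (k : ℤ) - (k + m : ℕ) - 1 = -(m + 1 : ℕ) by push_cast; ring, zpow_neg, zpow_natCast]
    ring
  have hc : ∀ j γ, ¬ (∀ i, 0 ≤ γ i) → c j γ t = 0 :=
    fun j γ hγ => hsupp j γ t fun h => hγ h.1
  have hdecay_m := hdecay (m + 1) (Nat.le_add_left 1 m) t ht
  simp only [tsum_fintype] at hdecay_m ⊢
  refine ⟨fun α hα => ?_, fun β hβ => ?_⟩
  · refine (sum_abs_sum_mul_le (ι := MultiIndex d (k + m)) (m := m + 1) (fun j γ => c j γ t) hc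
      (fun _ => α) k (fun _ => apply_le ⟨α, hα⟩) (fun j β => shift β.1 α j) (shift_injective_left α)
      (fun j β => sum_shift β.2 hα j)).trans ?_
    rw [hrate]
    gcongr
  · refine (sum_abs_sum_mul_le (ι := MultiIndex d k) (m := m + 1) (fun j γ => c j γ t) hc
      (fun α j => α.1 j) k apply_le (fun j α => shift β α.1 j) (shift_injective_right β)
      (fun j α => sum_shift hβ α.2 j)).trans ?_
    rw [hrate]
    gcongr

theorem stmt_12 (d : ℕ) (hd : 1 ≤ d) (t₀ D₀ R : ℝ) (hD₀ : 0 < D₀) (hR : 0 < R)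
    (c : Fin d → (Fin d → ℤ) → ℝ → ℝ)
    (hsupp : ∀ (j : Fin d) (γ : Fin d → ℤ) (t : ℝ),
      ¬ ((∀ i, 0 ≤ γ i) ∧ γ ≠ 0) → c j γ t = 0)
    (hdecay : ∀ m : ℕ, 1 ≤ m → ∀ t, t₀ ≤ t →
      ∑ j, ∑' γ : {γ : Fin d → ℕ // ∑ i, γ i = m},
        |c j (fun i => (γ.1 i : ℤ)) t| ≤ D₀ / R ^ m)
    (k l : ℕ) (hk : 1 ≤ k) (hkl : k ≤ l) (t : ℝ) (ht : t₀ ≤ t) :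
    (∀ α : Fin d → ℕ, ∑ i, α i = k →
      ∑' β : {β : Fin d → ℕ // ∑ i, β i = l},
        |∑ j, (α j : ℝ) *
          c j (fun i => (β.1 i : ℤ) - (α i : ℤ) + if i = j then 1 else 0) t|
        ≤ D₀ * k * R ^ ((k : ℤ) - l - 1)) ∧
    (∀ β : Fin d → ℕ, ∑ i, β i = l →
      ∑' α : {α : Fin d → ℕ // ∑ i, α i = k},
        |∑ j, (α.1 j : ℝ) *
          c j (fun i => (β i : ℤ) - (α.1 i : ℤ) + if i = j then 1 else 0) t|
        ≤ D₀ * k * R ^ ((k : ℤ) - l - 1)) :=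
  stmt_12_general d t₀ D₀ R c hsupp hdecay k l hkl t ht
end

section
/- If additionally the zeroth-order coefficients satisfy sup_{t≥t_0} ∑_{j=1}^d |f_{j,0}(t)| ≤ ν₀, then the sub-diagonal Carleman blocks satisfy sup_{t≥t_0} ‖A_{k+1,k}(t)‖_{S(Z_{k+1}^d, Z_k^d)} ≤ ν₀ (k+1) for all k ≥ 1, and A_{k,l}(t) = 0 for 1 ≤ l < k-1. -/
/-!
The entry `A_{α,β}` of a Carleman block is `∑ⱼ αⱼ f_{j, β - α + e_j}`, and the coordinates of
`β - α + e_j` add up to `|β| - |α| + 1`. For `|β| + 1 < |α|` this is negative, so some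
coordinate is negative and every coefficient vanishes. For `|α| = |β| + 1` it is zero, so the
only coefficient that can survive is `f_{j,0}`, and only when `α = β + e_j`. Each row and each
column of `A_{k+1,k}` therefore has, for every `j`, at most one entry involving `f_{j,0}`, with
weight `αⱼ ≤ k + 1`.
-/

open Finset

section OrderedSemiring

variable {R X : Type*} [Semiring R] [PartialOrder R] [IsOrderedRing R]

lemma Finset.sum_ite_le_of_subsingleton (s : Finset X) {p : X → Prop} [DecidablePred p]
    (hp : ∀ x y, p x → p y → x = y) {M : R} (hM : 0 ≤ M) :
    ∑ x ∈ s, (if p x then M else 0) ≤ M := by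
  rw [← sum_filter, sum_const, nsmul_eq_mul]
  have hcard : (s.filter p).card ≤ 1 :=
    card_le_one.2 fun a ha b hb => hp a b (mem_filter.1 ha).2 (mem_filter.1 hb).2
  calc ((s.filter p).card : R) * M ≤ 1 * M := by gcongr; exact (Nat.mono_cast hcard).trans_eq Nat.cast_one
    _ = M := one_mul M

end OrderedSemiring

lemma tsum_le_sum_of_le_sum_ite {ι J : Type*} [Fintype J] {g : ι → ℝ} {M : J → ℝ}
    {P : J → ι → Prop} [∀ j, DecidablePred (P j)] (hM : ∀ j, 0 ≤ M j)
    (hP : ∀ j x y, P j x → P j y → x = y) (hg : ∀ x, g x ≤ ∑ j, if P j x then M j else 0) :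
    ∑' x, g x ≤ ∑ j, M j := by
  refine tsum_le_of_sum_le' (sum_nonneg fun j _ => hM j) fun s => ?_
  calc ∑ x ∈ s, g x ≤ ∑ x ∈ s, ∑ j, (if P j x then M j else 0) := sum_le_sum fun x _ => hg x
    _ = ∑ j, ∑ x ∈ s, (if P j x then M j else 0) := sum_comm
    _ ≤ ∑ j, M j := sum_le_sum fun j _ => s.sum_ite_le_of_subsingleton (hP j) (hM j)

namespace Carleman

variable {d : ℕ}

/-- The multi-index `β - α + e_j` of the coefficient `f_{j, β - α + e_j}` in `A_{α,β}`. -/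
def shiftIndex (α β : Fin d → ℕ) (j : Fin d) : Fin d → ℤ :=
  fun i => (β i : ℤ) - (α i : ℤ) + if i = j then 1 else 0

def entry (a : Fin d → (Fin d → ℤ) → ℝ) (α β : Fin d → ℕ) : ℝ :=
  ∑ j, (α j : ℝ) * a j (shiftIndex α β j)

lemma sum_shiftIndex (α β : Fin d → ℕ) (j : Fin d) :
    ∑ i, shiftIndex α β j i = ((∑ i, β i : ℕ) : ℤ) - ((∑ i, α i : ℕ) : ℤ) + 1 := by
  simp [shiftIndex, sum_add_distrib, sum_sub_distrib]

lemma not_nonneg_shiftIndex {α β : Fin d → ℕ} (h : ∑ i, β i + 1 < ∑ i, α i) (j : Fin d) :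
    ¬ ∀ i, 0 ≤ shiftIndex α β j i := fun hnonneg => by
  have hsum := sum_shiftIndex α β j
  have := sum_nonneg fun i (_ : i ∈ univ) => hnonneg i
  omega

lemma eq_add_single_of_nonneg_shiftIndex {α β : Fin d → ℕ} (h : ∑ i, α i = ∑ i, β i + 1)
    {j : Fin d} (hnonneg : ∀ i, 0 ≤ shiftIndex α β j i) : α = β + Pi.single j 1 := by
  have hsum : ∑ i, shiftIndex α β j i = 0 := by rw [sum_shiftIndex]; omega
  have hzero := (sum_eq_zero_iff_of_nonneg fun i _ => hnonneg i).1 hsum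
  funext i
  have hi := hzero i (mem_univ i)
  simp only [shiftIndex] at hi
  by_cases hij : i = j
  · subst hij; simp only [if_true] at hi; simp; omega
  · simp only [hij, if_false] at hi; simp [hij]; omega

lemma shiftIndex_add_single (β : Fin d → ℕ) (j : Fin d) :
    shiftIndex (β + Pi.single j 1) β j = 0 := by
  funext i
  by_cases hij : i = j
  · subst hij; simp [shiftIndex]
  · simp [shiftIndex, hij]

variable {a : Fin d → (Fin d → ℤ) → ℝ} (ha : ∀ j γ, ¬ (∀ i, 0 ≤ γ i) → a j γ = 0)
include ha

lemma entry_eq_zero_of_lt {α β : Fin d → ℕ} (h : ∑ i, β i + 1 < ∑ i, α i) : entry a α β = 0 :=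
  sum_eq_zero fun j _ => by rw [ha j _ (not_nonneg_shiftIndex h j), mul_zero]

lemma abs_entry_le {k : ℕ} {α β : Fin d → ℕ} (hα : ∑ i, α i = k + 1) (hβ : ∑ i, β i = k) :
    |entry a α β| ≤ ∑ j, if α = β + Pi.single j 1 then ((k : ℝ) + 1) * |a j 0| else 0 := by
  refine (abs_sum_le_sum_abs _ _).trans (sum_le_sum fun j _ => ?_)
  split_ifs with hαβ
  · have hαj : (α j : ℝ) ≤ k + 1 := by
      exact_mod_cast hα ▸ single_le_sum (fun i _ => Nat.zero_le (α i)) (mem_univ j)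
    rw [hαβ, shiftIndex_add_single, abs_mul, Nat.abs_cast, ← hαβ]
    gcongr
  · by_cases hnonneg : ∀ i, 0 ≤ shiftIndex α β j i
    · exact absurd (eq_add_single_of_nonneg_shiftIndex (by omega) hnonneg) hαβ
    · rw [ha j _ hnonneg, mul_zero, abs_zero]

lemma tsum_abs_entry_row_le {k : ℕ} {α : Fin d → ℕ} (hα : ∑ i, α i = k + 1) :
    ∑' β : {β : Fin d → ℕ // ∑ i, β i = k}, |entry a α β| ≤ ∑ j, ((k : ℝ) + 1) * |a j 0| :=
  tsum_le_sum_of_le_sum_ite (fun _ => by positivity)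
    (fun _ _ _ hx hy => Subtype.ext (add_right_cancel (hx.symm.trans hy)))
    fun β => abs_entry_le ha hα β.2

lemma tsum_abs_entry_column_le {k : ℕ} {β : Fin d → ℕ} (hβ : ∑ i, β i = k) :
    ∑' α : {α : Fin d → ℕ // ∑ i, α i = k + 1}, |entry a α β| ≤ ∑ j, ((k : ℝ) + 1) * |a j 0| :=
  tsum_le_sum_of_le_sum_ite (fun _ => by positivity)
    (fun _ _ _ hx hy => Subtype.ext (hx.trans hy.symm))
    fun α => abs_entry_le ha α.2 hβ

end Carleman

open Carleman in
theorem stmt_13_general (d : ℕ) (t₀ ν₀ : ℝ)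
    (c : Fin d → (Fin d → ℤ) → ℝ → ℝ)
    (hsupp : ∀ (j : Fin d) (γ : Fin d → ℤ) (t : ℝ),
      ¬ (∀ i, 0 ≤ γ i) → c j γ t = 0)
    (hν : ∀ t, t₀ ≤ t → ∑ j, |c j 0 t| ≤ ν₀) :
    (∀ k : ℕ, 1 ≤ k → ∀ t, t₀ ≤ t →
      (∀ α : Fin d → ℕ, ∑ i, α i = k + 1 →
        ∑' β : {β : Fin d → ℕ // ∑ i, β i = k},
          |∑ j, (α j : ℝ) *
            c j (fun i => (β.1 i : ℤ) - (α i : ℤ) + if i = j then 1 else 0) t|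
          ≤ ν₀ * (k + 1)) ∧
      (∀ β : Fin d → ℕ, ∑ i, β i = k →
        ∑' α : {α : Fin d → ℕ // ∑ i, α i = k + 1},
          |∑ j, (α.1 j : ℝ) *
            c j (fun i => (β i : ℤ) - (α.1 i : ℤ) + if i = j then 1 else 0) t|
          ≤ ν₀ * (k + 1))) ∧
    (∀ k l : ℕ, 1 ≤ l → l + 1 < k → ∀ t : ℝ,
      ∀ α β : Fin d → ℕ, ∑ i, α i = k → ∑ i, β i = l →
        ∑ j, (α j : ℝ) *
          c j (fun i => (β i : ℤ) - (α i : ℤ) + if i = j then 1 else 0) t = 0) := by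
  have hbound : ∀ t, t₀ ≤ t → ∀ k : ℕ, ∑ j, ((k : ℝ) + 1) * |c j 0 t| ≤ ν₀ * (k + 1) :=
    fun t ht k => by rw [← mul_sum, mul_comm]; gcongr; exact hν t ht
  refine ⟨fun k _ t ht => ⟨fun α hα => ?_, fun β hβ => ?_⟩, ?_⟩
  · exact (tsum_abs_entry_row_le (a := fun j γ => c j γ t) (fun j γ => hsupp j γ t) hα).trans
      (hbound t ht k)
  · exact (tsum_abs_entry_column_le (a := fun j γ => c j γ t) (fun j γ => hsupp j γ t) hβ).trans
      (hbound t ht k)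
  · intro k l _ hlk t α β hα hβ
    exact entry_eq_zero_of_lt (a := fun j γ => c j γ t) (fun j γ => hsupp j γ t) (by omega)

theorem stmt_13 (d : ℕ) (hd : 1 ≤ d) (t₀ ν₀ : ℝ) (hν₀ : 0 ≤ ν₀)
    (c : Fin d → (Fin d → ℤ) → ℝ → ℝ)
    (hsupp : ∀ (j : Fin d) (γ : Fin d → ℤ) (t : ℝ),
      ¬ (∀ i, 0 ≤ γ i) → c j γ t = 0)
    (hν : ∀ t, t₀ ≤ t → ∑ j, |c j 0 t| ≤ ν₀) :
    (∀ k : ℕ, 1 ≤ k → ∀ t, t₀ ≤ t →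
      (∀ α : Fin d → ℕ, ∑ i, α i = k + 1 →
        ∑' β : {β : Fin d → ℕ // ∑ i, β i = k},
          |∑ j, (α j : ℝ) *
            c j (fun i => (β.1 i : ℤ) - (α i : ℤ) + if i = j then 1 else 0) t|
          ≤ ν₀ * (k + 1)) ∧
      (∀ β : Fin d → ℕ, ∑ i, β i = k →
        ∑' α : {α : Fin d → ℕ // ∑ i, α i = k + 1},
          |∑ j, (α.1 j : ℝ) *
            c j (fun i => (β i : ℤ) - (α.1 i : ℤ) + if i = j then 1 else 0) t|
          ≤ ν₀ * (k + 1))) ∧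
    (∀ k l : ℕ, 1 ≤ l → l + 1 < k → ∀ t : ℝ,
      ∀ α β : Fin d → ℕ, ∑ i, α i = k → ∑ i, β i = l →
        ∑ j, (α j : ℝ) *
          c j (fun i => (β i : ℤ) - (α i : ℤ) + if i = j then 1 else 0) t = 0) :=
  stmt_13_general d t₀ ν₀ c hsupp hν
end
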